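/- arXiv:1007.2683 — 2 statements merged into one kernel-verified Lean document; each statement's English description precedes it below -/
import Mathlib

section
/- Let p be an odd prime and P = F_p[y_0, y_-, y_+] with the sl_2-derivations β_0, β_-, β_+ as above. Every polynomial f ∈ P with β_0(f) = β_-(f) = β_+(f) = 0 lies in the F_p-subalgebra A generated by κ = y_0^2 + y_- y_+, s_0 = y_0^p, s_- = y_-^p, and s_+ = y_+^p. Hence the invariant ring H^0(sl_2(F_p), Poly(ad^*)) equals A. -/
/-!
Let `Ψ = substKappa` substitute `κ = y_0 ^ 2 + y_- y_+` for `y_0`; it is injective and its image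
is the ring of polynomials even in `y_0`, so every `f` is uniquely `Ψ G + y_0 Ψ H`. Since `β_∓`
kill `κ`, they act on `Ψ g` as `± 2 y_0 Ψ(∂_∓ g)`, and `β_- f = β_+ f = 0` splits into
`∂_- G = ∂_+ G = 0` (so `G` is a polynomial in `y_0, y_- ^ p, y_+ ^ p` and `Ψ G` lies in
`A = adjoinKappaFrobenius`) and `2 (y_0 - y_- y_+) ∂_∓ H = e y_± H` with `e = 1`. While `p ∤ e`,
this makes the prime `y_0 - y_- y_+` divide `H`, the quotient satisfies the same equations with
`e + 2`, and `Ψ(y_0 - y_- y_+) = y_0 ^ 2` gives `y_0 ^ e Ψ H = y_0 ^ (e + 2) Ψ (H / (y_0 - y_- y_+))`.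
After at most `(p - 1) / 2` steps `p ∣ e`, so `∂_∓ H = 0` and `y_0 ^ e Ψ H ∈ A`. Conversely, in
characteristic `p` every derivation kills `p`-th powers, and the `β`'s kill `κ`.
-/

open MvPolynomial

/-- The derivation `β_0 = 2y_+ ∂/∂y_+ - 2y_- ∂/∂y_-` on `F_p[y_0, y_-, y_+]`
(variables indexed `0 ↦ y_0`, `1 ↦ y_-`, `2 ↦ y_+`). -/
noncomputable def betaZero (p : ℕ) :
    Derivation (ZMod p) (MvPolynomial (Fin 3) (ZMod p)) (MvPolynomial (Fin 3) (ZMod p)) :=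
  (2 * X 2 : MvPolynomial (Fin 3) (ZMod p)) • pderiv 2
    - (2 * X 1 : MvPolynomial (Fin 3) (ZMod p)) • pderiv 1

/-- The derivation `β_- = -y_+ ∂/∂y_0 + 2y_0 ∂/∂y_-`. -/
noncomputable def betaMinus (p : ℕ) :
    Derivation (ZMod p) (MvPolynomial (Fin 3) (ZMod p)) (MvPolynomial (Fin 3) (ZMod p)) :=
  (2 * X 0 : MvPolynomial (Fin 3) (ZMod p)) • pderiv 1
    - (X 2 : MvPolynomial (Fin 3) (ZMod p)) • pderiv 0

/-- The derivation `β_+ = y_- ∂/∂y_0 - 2y_0 ∂/∂y_+`. -/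
noncomputable def betaPlus (p : ℕ) :
    Derivation (ZMod p) (MvPolynomial (Fin 3) (ZMod p)) (MvPolynomial (Fin 3) (ZMod p)) :=
  (X 1 : MvPolynomial (Fin 3) (ZMod p)) • pderiv 0
    - (2 * X 0 : MvPolynomial (Fin 3) (ZMod p)) • pderiv 2

theorem Derivation.map_aeval_eq_sum {R A M σ : Type*} [CommSemiring R] [CommSemiring A]
    [Algebra R A] [AddCommMonoid M] [Module A M] [Module R M] [IsScalarTower R A M] [Fintype σ]
    (D : Derivation R A M) (v : σ → A) (g : MvPolynomial σ R) :
    D (aeval v g) = ∑ i, aeval v (pderiv i g) • D (v i) := by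
  classical
  induction g using MvPolynomial.induction_on with
  | C a => simp
  | add f g hf hg => simp only [map_add, hf, hg, add_smul, Finset.sum_add_distrib]
  | mul_X g i hg =>
    rw [map_mul, aeval_X, Derivation.leibniz, hg]
    simp only [pderiv_mul, pderiv_X, map_add, map_mul, add_smul, Finset.sum_add_distrib]
    rw [add_comm, Finset.smul_sum]
    congr 1
    · simp only [aeval_X, mul_comm _ (v i), mul_smul]
    · simp [Pi.single_apply]

namespace Sl2Invariants

section CommRing

variable (R : Type*) [CommRing R]

noncomputable def substKappa : MvPolynomial (Fin 3) R →ₐ[R] MvPolynomial (Fin 3) R :=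
  aeval ![X 0 ^ 2 + X 1 * X 2, X 1, X 2]

noncomputable def adjoinKappaFrobenius (p : ℕ) : Subalgebra R (MvPolynomial (Fin 3) R) :=
  Algebra.adjoin R {X 0 ^ 2 + X 1 * X 2, X 0 ^ p, X 1 ^ p, X 2 ^ p}

variable {R}

@[simp] lemma substKappa_X_zero : substKappa R (X 0) = X 0 ^ 2 + X 1 * X 2 := by
  simp [substKappa]

@[simp] lemma substKappa_X_one : substKappa R (X 1) = X 1 := by simp [substKappa]

@[simp] lemma substKappa_X_two : substKappa R (X 2) = X 2 := by simp [substKappa]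

lemma substKappa_X_zero_sub_X_one_mul_X_two : substKappa R (X 0 - X 1 * X 2) = X 0 ^ 2 := by
  simp

lemma finSuccEquiv_X_one : finSuccEquiv R 2 (X 1) = Polynomial.C (X 0) :=
  finSuccEquiv_X_succ (j := 0)

lemma finSuccEquiv_X_two : finSuccEquiv R 2 (X 2) = Polynomial.C (X 1) :=
  finSuccEquiv_X_succ (j := 1)

lemma finSuccEquiv_substKappa (f : MvPolynomial (Fin 3) R) :
    finSuccEquiv R 2 (substKappa R f) =
      Polynomial.expand _ 2 (Polynomial.taylor (X 0 * X 1) (finSuccEquiv R 2 f)) := by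
  induction f using MvPolynomial.induction_on with
  | C a => simp [substKappa, finSuccEquiv_apply]
  | add f g hf hg => simp only [map_add, hf, hg]
  | mul_X f i hf =>
    simp only [map_mul, hf, Polynomial.taylor_mul]
    refine congrArg (fun q : Polynomial (MvPolynomial (Fin 2) R) => _ * q) ?_
    fin_cases i <;> simp [finSuccEquiv_X_zero, finSuccEquiv_X_one, finSuccEquiv_X_two]

lemma substKappa_injective : Function.Injective (substKappa R) := by
  intro f g h
  have := congrArg (finSuccEquiv R 2) h
  rw [finSuccEquiv_substKappa, finSuccEquiv_substKappa] at this
  exact (finSuccEquiv R 2).injective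
    (Polynomial.taylor_injective _ (Polynomial.expand_injective two_pos this))

lemma exists_eq_substKappa_add_X_zero_mul (f : MvPolynomial (Fin 3) R) :
    ∃ G H, f = substKappa R G + X 0 * substKappa R H := by
  induction f using MvPolynomial.induction_on with
  | C a => exact ⟨C a, 0, by simp [substKappa]⟩
  | add f g hf hg =>
    obtain ⟨G, H, rfl⟩ := hf
    obtain ⟨G', H', rfl⟩ := hg
    exact ⟨G + G', H + H', by simp only [map_add]; ring⟩
  | mul_X f i hf =>
    obtain ⟨G, H, rfl⟩ := hf
    fin_cases i
    · refine ⟨(X 0 - X 1 * X 2) * H, G, ?_⟩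
      rw [Fin.zero_eta, map_mul, substKappa_X_zero_sub_X_one_mul_X_two]
      ring
    · exact ⟨G * X 1, H * X 1, by simp only [Fin.mk_one, map_mul, substKappa_X_one]; ring⟩
    · exact ⟨G * X 2, H * X 2, by simp only [Fin.reduceFinMk, map_mul, substKappa_X_two]; ring⟩

lemma two_ne_zero_of_ne_zero {σ : Type*} (htwo : (2 : R) ≠ 0) :
    (2 : MvPolynomial σ R) ≠ 0 := by
  rwa [← map_ofNat C 2, Ne, C_eq_zero]

lemma eq_zero_of_substKappa_add_X_zero_mul_eq_zero [IsDomain R] (htwo : (2 : R) ≠ 0)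
    {G H : MvPolynomial (Fin 3) R} (h : substKappa R G + X 0 * substKappa R H = 0) :
    G = 0 ∧ H = 0 := by
  set negX0 : MvPolynomial (Fin 3) R →ₐ[R] MvPolynomial (Fin 3) R := aeval ![-X 0, X 1, X 2]
  have hneg : negX0.comp (substKappa R) = substKappa R := by
    ext i
    fin_cases i <;> simp [negX0, substKappa]
  have h' : substKappa R G - X 0 * substKappa R H = 0 := by
    have := congrArg negX0 h
    rw [map_add, map_mul, ← AlgHom.comp_apply, ← AlgHom.comp_apply, hneg, map_zero] at this
    simpa [negX0, sub_eq_add_neg] using this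
  have hG : substKappa R G = 0 := by
    have : (2 : MvPolynomial (Fin 3) R) * substKappa R G = 0 := by linear_combination h + h'
    exact (mul_eq_zero.mp this).resolve_left (two_ne_zero_of_ne_zero htwo)
  have hH : substKappa R H = 0 := by
    rw [hG, zero_add] at h
    exact (mul_eq_zero.mp h).resolve_left (X_ne_zero 0)
  exact ⟨substKappa_injective (by rw [hG, map_zero]),
    substKappa_injective (by rw [hH, map_zero])⟩

lemma kappa_mem_adjoinKappaFrobenius {p : ℕ} : X 0 ^ 2 + X 1 * X 2 ∈ adjoinKappaFrobenius R p :=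
  Algebra.subset_adjoin (by simp)

lemma X_pow_mem_adjoinKappaFrobenius {p : ℕ} (i : Fin 3) : X i ^ p ∈ adjoinKappaFrobenius R p :=
  Algebra.subset_adjoin (by fin_cases i <;> simp)

lemma derivation_eq_zero_of_mem_adjoinKappaFrobenius {p : ℕ} [CharP R p]
    (D : Derivation R (MvPolynomial (Fin 3) R) (MvPolynomial (Fin 3) R))
    (hD : D (X 0 ^ 2 + X 1 * X 2) = 0) {f : MvPolynomial (Fin 3) R}
    (hf : f ∈ adjoinKappaFrobenius R p) : D f = 0 := by
  refine Derivation.eqOn_adjoin (D2 := 0) ?_ hf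
  rintro g (rfl | rfl | rfl | rfl) <;> simp [hD, Derivation.leibniz_pow]

section IsDomain

variable [IsDomain R]

lemma prime_X_zero_sub_X_one_mul_X_two : Prime (X 0 - X 1 * X 2 : MvPolynomial (Fin 3) R) := by
  have : finSuccEquiv R 2 (X 0 - X 1 * X 2) = Polynomial.X - Polynomial.C (X 0 * X 1) := by
    rw [map_sub, map_mul, finSuccEquiv_X_zero, finSuccEquiv_X_one, finSuccEquiv_X_two,
      Polynomial.C_mul]
  rw [← MulEquiv.prime_iff (finSuccEquiv R 2), this]
  exact Polynomial.prime_X_sub_C _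

lemma X_zero_sub_X_one_mul_X_two_dvd {e : ℕ} (he : (e : MvPolynomial (Fin 3) R) ≠ 0)
    {H : MvPolynomial (Fin 3) R}
    (h : 2 * (X 0 - X 1 * X 2) * pderiv 1 H = (e : MvPolynomial (Fin 3) R) * (X 2 * H)) :
    X 0 - X 1 * X 2 ∣ H := by
  have hdvd : X 0 - X 1 * X 2 ∣ ((e : MvPolynomial (Fin 3) R) * X 2) * H :=
    ⟨2 * pderiv 1 H, by rw [mul_assoc, ← h]; ring⟩
  refine (prime_X_zero_sub_X_one_mul_X_two.dvd_or_dvd hdvd).resolve_left ?_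
  rintro ⟨u, hu⟩
  have := congrArg (aeval (R := R) ![(X 1 * X 2 : MvPolynomial (Fin 3) R), X 1, X 2]) hu
  simp [he, X_ne_zero] at this

lemma mul_pderiv_eq_of_mul_pderiv_mul_eq {i : Fin 3} {Y : MvPolynomial (Fin 3) R}
    (hY : pderiv i (X 0 - X 1 * X 2) = -Y) {e : ℕ} {H : MvPolynomial (Fin 3) R}
    (h : 2 * (X 0 - X 1 * X 2) * pderiv i ((X 0 - X 1 * X 2) * H) =
      (e : MvPolynomial (Fin 3) R) * (Y * ((X 0 - X 1 * X 2) * H))) :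
    2 * (X 0 - X 1 * X 2) * pderiv i H = ((e + 2 : ℕ) : MvPolynomial (Fin 3) R) * (Y * H) := by
  apply mul_left_cancel₀ prime_X_zero_sub_X_one_mul_X_two.ne_zero
  rw [pderiv_mul, hY] at h
  push_cast
  linear_combination h

section CharP

variable {p : ℕ} [CharP R p]

lemma dvd_of_pderiv_eq_zero {f : MvPolynomial (Fin 3) R} {i : Fin 3} (h : pderiv i f = 0)
    {m : Fin 3 →₀ ℕ} (hm : m ∈ f.support) : p ∣ m i := by
  rcases Nat.eq_zero_or_pos (m i) with hmi | hmi
  · simp [hmi]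
  obtain ⟨m', rfl⟩ : ∃ m', m = m' + Finsupp.single i 1 :=
    ⟨m - Finsupp.single i 1, (tsub_add_cancel_of_le (Finsupp.single_le_iff.mpr hmi)).symm⟩
  have hcoeff := coeff_pderiv (i := i) f m'
  rw [h, coeff_zero, eq_comm, mul_eq_zero] at hcoeff
  have hcast : ((m' i + 1 : ℕ) : R) = 0 := by
    exact_mod_cast hcoeff.resolve_left (mem_support_iff.mp hm)
  simpa using (CharP.cast_eq_zero_iff R p _).mp hcast

lemma substKappa_mem_adjoinKappaFrobenius {G : MvPolynomial (Fin 3) R}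
    (h1 : pderiv 1 G = 0) (h2 : pderiv 2 G = 0) : substKappa R G ∈ adjoinKappaFrobenius R p := by
  rw [G.as_sum, map_sum]
  refine Subalgebra.sum_mem _ fun m hm => ?_
  obtain ⟨k1, hk1⟩ := dvd_of_pderiv_eq_zero h1 hm
  obtain ⟨k2, hk2⟩ := dvd_of_pderiv_eq_zero h2 hm
  rw [monomial_eq, Finsupp.prod_fintype _ _ fun _ => pow_zero _, Fin.prod_univ_three]
  simp only [map_mul, map_pow, algHom_C, substKappa_X_zero, substKappa_X_one, substKappa_X_two,
    hk1, hk2, pow_mul]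
  refine mul_mem (Subalgebra.algebraMap_mem _ _) (mul_mem (mul_mem ?_ ?_) ?_)
  · exact pow_mem kappa_mem_adjoinKappaFrobenius _
  · exact pow_mem (X_pow_mem_adjoinKappaFrobenius 1) _
  · exact pow_mem (X_pow_mem_adjoinKappaFrobenius 2) _

lemma X_zero_pow_mul_substKappa_mem_of_dvd (htwo : (2 : R) ≠ 0) {e : ℕ} (hpe : p ∣ e)
    {H : MvPolynomial (Fin 3) R}
    (h1 : 2 * (X 0 - X 1 * X 2) * pderiv 1 H = (e : MvPolynomial (Fin 3) R) * (X 2 * H))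
    (h2 : 2 * (X 0 - X 1 * X 2) * pderiv 2 H = (e : MvPolynomial (Fin 3) R) * (X 1 * H)) :
    X 0 ^ e * substKappa R H ∈ adjoinKappaFrobenius R p := by
  have he : (e : MvPolynomial (Fin 3) R) = 0 := (CharP.cast_eq_zero_iff _ p e).mpr hpe
  have hc : 2 * (X 0 - X 1 * X 2 : MvPolynomial (Fin 3) R) ≠ 0 :=
    mul_ne_zero (two_ne_zero_of_ne_zero htwo) prime_X_zero_sub_X_one_mul_X_two.ne_zero
  rw [he, zero_mul] at h1 h2
  obtain ⟨k, rfl⟩ := hpe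
  rw [pow_mul]
  exact mul_mem (pow_mem (X_pow_mem_adjoinKappaFrobenius 0) k)
    (substKappa_mem_adjoinKappaFrobenius ((mul_eq_zero.mp h1).resolve_left hc)
      ((mul_eq_zero.mp h2).resolve_left hc))

theorem X_zero_pow_mul_substKappa_mem (htwo : (2 : R) ≠ 0) (j : ℕ) {e : ℕ} (hj : p ∣ e + 2 * j)
    {H : MvPolynomial (Fin 3) R}
    (h1 : 2 * (X 0 - X 1 * X 2) * pderiv 1 H = (e : MvPolynomial (Fin 3) R) * (X 2 * H))
    (h2 : 2 * (X 0 - X 1 * X 2) * pderiv 2 H = (e : MvPolynomial (Fin 3) R) * (X 1 * H)) :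
    X 0 ^ e * substKappa R H ∈ adjoinKappaFrobenius R p := by
  induction j generalizing e H with
  | zero => exact X_zero_pow_mul_substKappa_mem_of_dvd htwo hj h1 h2
  | succ j ih =>
    by_cases hpe : p ∣ e
    · exact X_zero_pow_mul_substKappa_mem_of_dvd htwo hpe h1 h2
    have he : (e : MvPolynomial (Fin 3) R) ≠ 0 := (CharP.cast_eq_zero_iff _ p e).not.mpr hpe
    obtain ⟨H', rfl⟩ := X_zero_sub_X_one_mul_X_two_dvd he h1
    have := ih (e := e + 2) (by convert hj using 1; ring)
      (mul_pderiv_eq_of_mul_pderiv_mul_eq (by simp) h1)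
      (mul_pderiv_eq_of_mul_pderiv_mul_eq (by simp) h2)
    rwa [map_mul, substKappa_X_zero_sub_X_one_mul_X_two, ← mul_assoc, ← pow_add]

end CharP

end IsDomain

end CommRing

section ZMod

variable {p : ℕ}

lemma betaZero_kappa : betaZero p (X 0 ^ 2 + X 1 * X 2) = 0 := by
  simp [betaZero, pderiv_X]; ring

lemma betaMinus_kappa : betaMinus p (X 0 ^ 2 + X 1 * X 2) = 0 := by
  simp [betaMinus, pderiv_X]; ring

lemma betaPlus_kappa : betaPlus p (X 0 ^ 2 + X 1 * X 2) = 0 := by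
  simp [betaPlus, pderiv_X]; ring

lemma betaMinus_substKappa (g : MvPolynomial (Fin 3) (ZMod p)) :
    betaMinus p (substKappa _ g) = 2 * X 0 * substKappa _ (pderiv 1 g) := by
  rw [substKappa, Derivation.map_aeval_eq_sum, Fin.sum_univ_three]
  simp only [Matrix.cons_val_zero, Matrix.cons_val_one, Matrix.cons_val_two, Matrix.head_cons,
    Matrix.tail_cons, betaMinus_kappa, smul_zero, zero_add]
  simp [betaMinus, pderiv_X]
  ring

lemma betaPlus_substKappa (g : MvPolynomial (Fin 3) (ZMod p)) :
    betaPlus p (substKappa _ g) = -(2 * X 0 * substKappa _ (pderiv 2 g)) := by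
  rw [substKappa, Derivation.map_aeval_eq_sum, Fin.sum_univ_three]
  simp only [Matrix.cons_val_zero, Matrix.cons_val_one, Matrix.cons_val_two, Matrix.head_cons,
    Matrix.tail_cons, betaPlus_kappa, smul_zero, zero_add]
  simp [betaPlus, pderiv_X]
  ring

lemma betaMinus_substKappa_add_X_zero_mul (G H : MvPolynomial (Fin 3) (ZMod p)) :
    betaMinus p (substKappa _ G + X 0 * substKappa _ H) =
      substKappa _ (2 * (X 0 - X 1 * X 2) * pderiv 1 H - X 2 * H) +
        X 0 * substKappa _ (2 * pderiv 1 G) := by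
  rw [map_add, Derivation.leibniz, betaMinus_substKappa, betaMinus_substKappa]
  simp [betaMinus, pderiv_X, substKappa_X_zero_sub_X_one_mul_X_two, map_ofNat]
  ring

lemma betaPlus_substKappa_add_X_zero_mul (G H : MvPolynomial (Fin 3) (ZMod p)) :
    betaPlus p (substKappa _ G + X 0 * substKappa _ H) =
      substKappa _ (X 1 * H - 2 * (X 0 - X 1 * X 2) * pderiv 2 H) +
        X 0 * substKappa _ (-(2 * pderiv 2 G)) := by
  rw [map_add, Derivation.leibniz, betaPlus_substKappa, betaPlus_substKappa]
  simp [betaPlus, pderiv_X, substKappa_X_zero_sub_X_one_mul_X_two, map_ofNat]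
  ring

theorem mem_adjoinKappaFrobenius_of_betaMinus_of_betaPlus [Fact p.Prime] (hp : p ≠ 2)
    {f : MvPolynomial (Fin 3) (ZMod p)} (hM : betaMinus p f = 0) (hP : betaPlus p f = 0) :
    f ∈ adjoinKappaFrobenius (ZMod p) p := by
  have htwo : (2 : ZMod p) ≠ 0 := Ring.two_ne_zero (by rwa [ZMod.ringChar_zmod_n])
  have htwo' := two_ne_zero_of_ne_zero (σ := Fin 3) htwo
  obtain ⟨G, H, rfl⟩ := exists_eq_substKappa_add_X_zero_mul f
  obtain ⟨hH1, hG1⟩ := eq_zero_of_substKappa_add_X_zero_mul_eq_zero htwo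
    ((betaMinus_substKappa_add_X_zero_mul G H).symm.trans hM)
  obtain ⟨hH2, hG2⟩ := eq_zero_of_substKappa_add_X_zero_mul_eq_zero htwo
    ((betaPlus_substKappa_add_X_zero_mul G H).symm.trans hP)
  have hodd : p ∣ 1 + 2 * ((p - 1) / 2) := by
    obtain ⟨k, rfl⟩ := (Fact.out : p.Prime).odd_of_ne_two hp
    exact ⟨1, by omega⟩
  refine add_mem (substKappa_mem_adjoinKappaFrobenius ?_ ?_) ?_
  · exact (mul_eq_zero.mp hG1).resolve_left htwo'
  · exact (mul_eq_zero.mp (neg_eq_zero.mp hG2)).resolve_left htwo'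
  · simpa using X_zero_pow_mul_substKappa_mem htwo _ (e := 1) hodd
      (by push_cast; linear_combination hH1) (by push_cast; linear_combination -hH2)

end ZMod

end Sl2Invariants

open Sl2Invariants in
/-- A polynomial `f ∈ F_p[y_0, y_-, y_+]` is killed by all three `sl_2`-derivations
`β_0, β_-, β_+` if and only if it lies in the `F_p`-subalgebra generated by
`κ = y_0^2 + y_- y_+`, `s_0 = y_0^p`, `s_- = y_-^p` and `s_+ = y_+^p`.  In particular the
invariant ring `H^0(sl_2(F_p), Poly(ad^*))` equals this subalgebra. -/
theorem stmt9 (p : ℕ) [Fact p.Prime] (hp : p ≠ 2)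
    (f : MvPolynomial (Fin 3) (ZMod p)) :
    (betaZero p f = 0 ∧ betaMinus p f = 0 ∧ betaPlus p f = 0) ↔
      f ∈ Algebra.adjoin (ZMod p)
        {((X 0 : MvPolynomial (Fin 3) (ZMod p)) ^ 2 + X 1 * X 2),
         ((X 0 : MvPolynomial (Fin 3) (ZMod p)) ^ p),
         ((X 1 : MvPolynomial (Fin 3) (ZMod p)) ^ p),
         ((X 2 : MvPolynomial (Fin 3) (ZMod p)) ^ p)} := by
  refine ⟨fun ⟨_, hM, hP⟩ => mem_adjoinKappaFrobenius_of_betaMinus_of_betaPlus hp hM hP,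
    fun hf => ⟨?_, ?_, ?_⟩⟩
  · exact derivation_eq_zero_of_mem_adjoinKappaFrobenius _ betaZero_kappa hf
  · exact derivation_eq_zero_of_mem_adjoinKappaFrobenius _ betaMinus_kappa hf
  · exact derivation_eq_zero_of_mem_adjoinKappaFrobenius _ betaPlus_kappa hf
end

section
/- Let i = (p-3)/2 for an odd prime p ≥ 5, and let a_0, ..., a_{i-1} ∈ F_p satisfy the recurrence: a_0 = 1 and a_j(2j+1) + a_{j-1}(2j - 2i - 2) = C(i,j) for 1 ≤ j ≤ i-1, where C(i,j) denotes the binomial coefficient mod p. Then a_j = C(i,j) for all 0 ≤ j ≤ i-1, and moreover -2a_{i-1} = -2i ≡ 3 mod p, which is not equal to 1 mod p (since p ≠ 2). -/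
/-- For an odd prime `p ≥ 5` and `i = (p-3)/2`: if `a_0, ..., a_{i-1} ∈ F_p` satisfy `a_0 = 1`
and the recurrence `a_j(2j+1) + a_{j-1}(2j - 2i - 2) = C(i,j)` for `1 ≤ j ≤ i-1`, then
`a_j = C(i,j)` for all `j ≤ i-1`, and `-2a_{i-1} = -2i ≡ 3 mod p`, which differs from `1`. -/
theorem stmt12 (p : ℕ) [Fact p.Prime] (hp5 : 5 ≤ p) (i : ℕ) (hi : i = (p - 3) / 2)
    (a : ℕ → ZMod p) (ha0 : a 0 = 1)
    (hrec : ∀ j : ℕ, 1 ≤ j → j ≤ i - 1 →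
      a j * (2 * (j : ZMod p) + 1) + a (j - 1) * (2 * (j : ZMod p) - 2 * (i : ZMod p) - 2) =
        (i.choose j : ZMod p)) :
    (∀ j ≤ i - 1, a j = (i.choose j : ZMod p)) ∧
    (-2 * a (i - 1) = -2 * (i : ZMod p)) ∧
    (-2 * (i : ZMod p) = 3) ∧
    ((3 : ZMod p) ≠ 1) := by
  have hp := (Fact.out : p.Prime)
  have hodd : p % 2 = 1 := Nat.odd_iff.mp (hp.odd_of_ne_two (by omega))
  have h2i : 2 * i = p - 3 := by omega
  have hi1 : 1 ≤ i := by omega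
  -- -2i = 3 in ZMod p
  have hcast2i : (2 : ZMod p) * (i : ZMod p) = -3 := by
    have : ((2 * i : ℕ) : ZMod p) = ((p - 3 : ℕ) : ZMod p) := by rw [h2i]
    push_cast at this
    have hp3 : ((p - 3 : ℕ) : ZMod p) = (p : ZMod p) - 3 := by
      have : (3 : ℕ) ≤ p := by omega
      push_cast [Nat.cast_sub this]
      ring
    rw [hp3, ZMod.natCast_self] at this
    rw [this]; ring
  have hkey : ∀ j ≤ i - 1, a j = (i.choose j : ZMod p) := by
    intro j
    induction j with
    | zero => intro _; simpa using ha0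
    | succ k ih =>
      intro hk
      have hak : a k = (i.choose k : ZMod p) := ih (by omega)
      have hr := hrec (k + 1) (by omega) hk
      simp only [Nat.add_sub_cancel] at hr
      rw [hak] at hr
      push_cast at hr
      -- nonvanishing of 2(k+1)+1
      have hnz : (2 * ((k : ZMod p) + 1) + 1) ≠ 0 := by
        intro h
        have h' : ((2 * (k + 1) + 1 : ℕ) : ZMod p) = 0 := by push_cast; linear_combination h
        have hd := (ZMod.natCast_eq_zero_iff _ _).mp h'
        have := Nat.le_of_dvd (by omega) hd
        omega
      -- binomial identity
      have hklt : k ≤ i := by omega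
      have hnat : i.choose (k + 1) * (k + 1) = i.choose k * (i - k) :=
        Nat.choose_succ_right_eq i k
      have hcastid : (i.choose (k + 1) : ZMod p) * ((k : ZMod p) + 1) =
          (i.choose k : ZMod p) * ((i : ZMod p) - (k : ZMod p)) := by
        have := congrArg (fun n : ℕ => (n : ZMod p)) hnat
        push_cast [Nat.cast_sub hklt] at this
        linear_combination this
      have hmul : a (k + 1) * (2 * ((k : ZMod p) + 1) + 1) =
          (i.choose (k + 1) : ZMod p) * (2 * ((k : ZMod p) + 1) + 1) := by
        linear_combination hr - 2 * hcastid
      exact mul_right_cancel₀ hnz hmul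
  refine ⟨hkey, ?_, ?_, ?_⟩
  · have h1 : a (i - 1) = (i.choose (i - 1) : ZMod p) := hkey _ le_rfl
    have h2 : i.choose (i - 1) = i := by
      rw [Nat.choose_symm (by omega : 1 ≤ i), Nat.choose_one_right]
    rw [h1, h2]
  · linear_combination -hcast2i
  · intro h
    have : ((2 : ℕ) : ZMod p) = 0 := by push_cast; linear_combination h
    have hd := (ZMod.natCast_eq_zero_iff _ _).mp this
    have := Nat.le_of_dvd (by omega) hd
    omega
end
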